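/- arXiv:2602.18955 — 2 statements merged into one kernel-verified Lean document; each statement's English description precedes it below -/
import Mathlib

section
/- Let p and q be probability mass functions on Y^n for a finite set Y, with p exchangeable (invariant under all coordinate permutations) and everywhere positive, and suppose the symmetrization q̂ of q is everywhere positive. Then the KL divergence decomposes as D_KL(q ‖ p) = D_KL(q ‖ q̂) + D_KL(q̂ ‖ p), where D_KL(a ‖ b) = Σ_y a(y) log(a(y)/b(y)) with the convention 0 log(0/b) = 0. -/
noncomputable def KL {α : Type*} [Fintype α] (a b : α → ℝ) : ℝ :=
  ∑ y, a y * Real.log (a y / b y)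

theorem kl_decomposition {Y : Type*} [Fintype Y] (n : ℕ)
    (q p : (Fin n → Y) → ℝ)
    (hq0 : ∀ y, 0 ≤ q y) (hq1 : ∑ y, q y = 1)
    (hp0 : ∀ y, 0 < p y) (hp1 : ∑ y, p y = 1)
    (hpex : ∀ (π : Equiv.Perm (Fin n)) (y : Fin n → Y), p (y ∘ π) = p y)
    (qhat : (Fin n → Y) → ℝ)
    (hqhat : ∀ y, qhat y = ((n.factorial : ℝ))⁻¹ * ∑ π : Equiv.Perm (Fin n), q (y ∘ π))
    (hqhat0 : ∀ y, 0 < qhat y) :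
    KL q p = KL q qhat + KL qhat p := by
  -- qhat is exchangeable
  have hqhatex : ∀ (π : Equiv.Perm (Fin n)) (y : Fin n → Y), qhat (y ∘ π) = qhat y := by
    intro π y
    rw [hqhat, hqhat]
    congr 1
    refine Fintype.sum_equiv (Equiv.mulLeft π) _ _ (fun σ => ?_)
    have : (y ∘ ⇑π) ∘ ⇑σ = y ∘ ⇑(π * σ) := by
      ext i; simp [Equiv.Perm.mul_apply]
    rw [this]
    rfl
  -- sums against symmetric functions
  have key : ∀ f : (Fin n → Y) → ℝ, (∀ (π : Equiv.Perm (Fin n)) (y : Fin n → Y), f (y ∘ π) = f y) →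
      ∑ y, qhat y * f y = ∑ y, q y * f y := by
    intro f hf
    have hcard : (Fintype.card (Equiv.Perm (Fin n)) : ℝ) = (n.factorial : ℝ) := by
      rw [Fintype.card_perm, Fintype.card_fin]
    have hfac : (0:ℝ) < (n.factorial : ℝ) := by positivity
    calc ∑ y, qhat y * f y
        = ((n.factorial : ℝ))⁻¹ * ∑ y, ∑ π : Equiv.Perm (Fin n), q (y ∘ π) * f y := by
          rw [Finset.mul_sum]
          refine Finset.sum_congr rfl (fun y _ => ?_)
          rw [hqhat, mul_assoc, Finset.sum_mul]
      _ = ((n.factorial : ℝ))⁻¹ * ∑ π : Equiv.Perm (Fin n), ∑ y, q (y ∘ π) * f y := by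
          rw [Finset.sum_comm]
      _ = ((n.factorial : ℝ))⁻¹ * ∑ π : Equiv.Perm (Fin n), ∑ y, q y * f y := by
          congr 1
          refine Finset.sum_congr rfl (fun π _ => ?_)
          refine Fintype.sum_equiv (Equiv.arrowCongr (π : Equiv (Fin n) (Fin n)).symm (Equiv.refl Y)) _ _ (fun y => ?_)
          have h1 : (Equiv.arrowCongr (π : Equiv (Fin n) (Fin n)).symm (Equiv.refl Y)) y = y ∘ ⇑π := by
            ext i; simp [Equiv.arrowCongr]
          rw [h1, hf π y]
      _ = ∑ y, q y * f y := by
          rw [Finset.sum_const, Finset.card_univ, nsmul_eq_mul, hcard, ← mul_assoc,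
            inv_mul_cancel₀ (ne_of_gt hfac), one_mul]
  -- pointwise decomposition
  have hpt : ∀ y, q y * Real.log (q y / p y)
      = q y * Real.log (q y / qhat y) + q y * Real.log (qhat y / p y) := by
    intro y
    rcases eq_or_lt_of_le (hq0 y) with h | h
    · simp [← h]
    · rw [← mul_add]
      congr 1
      rw [Real.log_div (ne_of_gt h) (ne_of_gt (hp0 y)),
        Real.log_div (ne_of_gt h) (ne_of_gt (hqhat0 y)),
        Real.log_div (ne_of_gt (hqhat0 y)) (ne_of_gt (hp0 y))]
      ring
  have hKL : KL q p = KL q qhat + ∑ y, q y * Real.log (qhat y / p y) := by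
    unfold KL
    rw [← Finset.sum_add_distrib]
    exact Finset.sum_congr rfl (fun y _ => hpt y)
  rw [hKL]
  congr 1
  have hfsym : ∀ (π : Equiv.Perm (Fin n)) (y : Fin n → Y),
      Real.log (qhat (y ∘ π) / p (y ∘ π)) = Real.log (qhat y / p y) := by
    intro π y; rw [hqhatex, hpex]
  rw [← key (fun y => Real.log (qhat y / p y)) hfsym]
  rfl
end

section
/- Under the hypotheses of the KL decomposition (p exchangeable and positive, q̂ positive), D_KL(q ‖ p) ≥ D_KL(q̂ ‖ p), with equality if and only if q is exchangeable (i.e., q(y ∘ π) = q(y) for all permutations π and all y). -/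
lemma sum_comp_perm {Y : Type*} [Fintype Y] {n : ℕ} (π : Equiv.Perm (Fin n))
    (f : (Fin n → Y) → ℝ) : ∑ y : Fin n → Y, f (y ∘ π) = ∑ y : Fin n → Y, f y := by
  have hbij : Function.Bijective (fun y : Fin n → Y => y ∘ π) := by
    rw [Function.bijective_iff_has_inverse]
    exact ⟨fun y => y ∘ π.symm, fun y => by funext i; simp, fun y => by funext i; simp⟩
  exact Fintype.sum_bijective _ hbij _ _ (fun y => rfl)

theorem kl_gap_nonneg_and_eq_iff_exchangeable {Y : Type*} [Fintype Y] (n : ℕ)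
    (q p : (Fin n → Y) → ℝ)
    (hq0 : ∀ y, 0 ≤ q y) (hq1 : ∑ y, q y = 1)
    (hp0 : ∀ y, 0 < p y) (hp1 : ∑ y, p y = 1)
    (hpex : ∀ (π : Equiv.Perm (Fin n)) (y : Fin n → Y), p (y ∘ π) = p y)
    (qhat : (Fin n → Y) → ℝ)
    (hqhat : ∀ y, qhat y = ((n.factorial : ℝ))⁻¹ * ∑ π : Equiv.Perm (Fin n), q (y ∘ π))
    (hqhat0 : ∀ y, 0 < qhat y) :
    KL qhat p ≤ KL q p ∧
    (KL q p = KL qhat p ↔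
      ∀ (π : Equiv.Perm (Fin n)) (y : Fin n → Y), q (y ∘ π) = q y) := by
  -- qhat is exchangeable
  have hqhatex : ∀ (σ : Equiv.Perm (Fin n)) (y : Fin n → Y), qhat (y ∘ σ) = qhat y := by
    intro σ y
    rw [hqhat, hqhat]
    congr 1
    have : ∀ π : Equiv.Perm (Fin n), (y ∘ σ) ∘ π = y ∘ (σ * π) := by
      intro π; rfl
    simp_rw [this]
    exact Equiv.sum_comp (Equiv.mulLeft σ) (fun π => q (y ∘ π))
  -- pairing against symmetric functions
  have pairing : ∀ F : (Fin n → Y) → ℝ, (∀ (σ : Equiv.Perm (Fin n)) y, F (y ∘ σ) = F y) →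
      ∑ y, qhat y * F y = ∑ y, q y * F y := by
    intro F hF
    have h1 : ∀ y, qhat y * F y
        = ((n.factorial : ℝ))⁻¹ * ∑ π : Equiv.Perm (Fin n), q (y ∘ π) * F (y ∘ π) := by
      intro y
      rw [hqhat]
      simp_rw [fun π : Equiv.Perm (Fin n) => hF π y]
      rw [← Finset.sum_mul, ← mul_assoc]
    simp_rw [h1, ← Finset.mul_sum]
    rw [Finset.sum_comm]
    have h2 : ∀ π : Equiv.Perm (Fin n),
        ∑ y : Fin n → Y, q (y ∘ π) * F (y ∘ π) = ∑ y, q y * F y :=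
      fun π => sum_comp_perm π (fun y => q y * F y)
    simp_rw [h2, Finset.sum_const, Finset.card_univ, Fintype.card_perm, Fintype.card_fin,
      nsmul_eq_mul]
    rw [← mul_assoc, inv_mul_cancel₀ (show (n.factorial : ℝ) ≠ 0 by positivity), one_mul]
  -- sum of qhat is 1
  have hqhat1 : ∑ y, qhat y = 1 := by
    have := pairing (fun _ => 1) (fun _ _ => rfl)
    simpa [hq1] using this
  -- decomposition KL q p = KL q qhat + KL qhat p
  have hdecomp : KL q p = KL q qhat + KL qhat p := by
    have hmid : ∑ y, q y * Real.log (qhat y / p y)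
        = ∑ y, qhat y * Real.log (qhat y / p y) := by
      refine (pairing (fun y => Real.log (qhat y / p y)) ?_).symm
      intro σ y; rw [hqhatex σ y, hpex σ y]
    unfold KL
    rw [← hmid, ← Finset.sum_add_distrib]
    refine Finset.sum_congr rfl fun y _ => ?_
    rcases eq_or_lt_of_le (hq0 y) with h | h
    · simp [← h]
    · rw [← mul_add, ← Real.log_mul (ne_of_gt (div_pos h (hqhat0 y)))
        (ne_of_gt (div_pos (hqhat0 y) (hp0 y)))]
      congr 2
      rw [div_mul_div_comm, mul_comm (q y) (qhat y),
        mul_div_mul_left _ _ (ne_of_gt (hqhat0 y))]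
  -- pointwise nonneg: qhat y - q y - q y * log (qhat y / q y) ≥ 0
  have hpt : ∀ y, q y * Real.log (q y / qhat y) ≥ q y - qhat y := by
    intro y
    rcases eq_or_lt_of_le (hq0 y) with h | h
    · simp [← h]
      exact (hqhat0 y).le
    · have hr : 0 < qhat y / q y := div_pos (hqhat0 y) h
      have h2 : q y * (qhat y / q y) = qhat y := by field_simp
      have h3 := mul_le_mul_of_nonneg_left (Real.log_le_sub_one_of_pos hr) h.le
      rw [mul_sub, mul_one, h2] at h3
      have hlog : Real.log (q y / qhat y) = - Real.log (qhat y / q y) := by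
        rw [← Real.log_inv]; congr 1; field_simp
      rw [hlog]
      linarith
  have hKLq : 0 ≤ KL q qhat := by
    have : ∑ y, (q y - qhat y) ≤ ∑ y, q y * Real.log (q y / qhat y) :=
      Finset.sum_le_sum fun y _ => hpt y
    unfold KL
    calc (0:ℝ) = ∑ y, (q y - qhat y) := by
          rw [Finset.sum_sub_distrib, hq1, hqhat1]; ring
      _ ≤ _ := this
  constructor
  · linarith [hdecomp, hKLq]
  · constructor
    · intro heq
      -- then KL q qhat = 0
      have hKL0 : KL q qhat = 0 := by linarith [hdecomp]
      -- each nonneg term is zero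
      have hterm : ∀ y ∈ Finset.univ,
          (0:ℝ) ≤ q y * Real.log (q y / qhat y) - (q y - qhat y) :=
        fun y _ => by linarith [hpt y]
      have hsum0 : ∑ y, (q y * Real.log (q y / qhat y) - (q y - qhat y)) = 0 := by
        rw [Finset.sum_sub_distrib, Finset.sum_sub_distrib, hq1, hqhat1]
        unfold KL at hKL0
        rw [hKL0]; ring
      have hall := (Finset.sum_eq_zero_iff_of_nonneg hterm).mp hsum0
      -- deduce q = qhat
      have hqeq : ∀ y, q y = qhat y := by
        intro y
        have hy := hall y (Finset.mem_univ y)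
        rcases eq_or_lt_of_le (hq0 y) with h | h
        · exfalso
          rw [← h] at hy
          simp at hy
          exact absurd hy (ne_of_gt (hqhat0 y))
        · by_contra hne
          have hr : 0 < qhat y / q y := div_pos (hqhat0 y) h
          have hr1 : qhat y / q y ≠ 1 := by
            intro hc
            exact hne ((div_eq_one_iff_eq (ne_of_gt h)).mp hc).symm
          have hst := Real.log_lt_sub_one_of_pos hr hr1
          have h2 : q y * (qhat y / q y) = qhat y := by field_simp
          have h3 := mul_lt_mul_of_pos_left hst h
          rw [mul_sub, mul_one, h2] at h3
          have hlog : Real.log (q y / qhat y) = - Real.log (qhat y / q y) := by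
            rw [← Real.log_inv]; congr 1; field_simp
          rw [hlog] at hy
          linarith
      intro π y
      rw [hqeq, hqeq, hqhatex π y]
    · intro hex
      have hqq : ∀ y, qhat y = q y := by
        intro y
        rw [hqhat]
        have : ∀ π : Equiv.Perm (Fin n), q (y ∘ π) = q y := fun π => hex π y
        simp_rw [this, Finset.sum_const, Finset.card_univ, Fintype.card_perm, Fintype.card_fin,
          nsmul_eq_mul]
        rw [← mul_assoc, inv_mul_cancel₀ (show (n.factorial : ℝ) ≠ 0 by positivity), one_mul]
      have : KL q qhat = 0 := by
        unfold KL
        refine Finset.sum_eq_zero fun y _ => ?_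
        rcases eq_or_lt_of_le (hq0 y) with h | h
        · simp [← h]
        · rw [hqq, div_self (ne_of_gt h), Real.log_one, mul_zero]
      linarith [hdecomp, this]
end
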